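/- If a convex compact set 𝒜 of n×n matrices satisfies that Q·A + A^T·Q is positive definite for all A ∈ 𝒜 (Q symmetric), and x, y : [0,T] → ℝ^n are distinct solutions of ẋ = f(x) such that Df(ξ) ∈ 𝒜 for all ξ on the segment joining x(t) and y(t) for each t, then the function t ↦ ⟨x(t)−y(t), Q(x(t)−y(t))⟩ is strictly increasing on [0,T]. -/

import Mathlib

/-! Write `z = x - y` and `V = ⟨z, Q z⟩`. Since `Q` is symmetric, `V' = 2 ⟨f x - f y, Q z⟩`.
Along the segment from `y` to `x`, `s ↦ ⟨f (y + s z), Q z⟩` has derivative `⟨A z, Q z⟩` with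
`A = Df ξ ∈ 𝒜`, and `2 ⟨A z, Q z⟩ = ⟨z, (Q A + Aᵀ Q) z⟩ > 0` because `z ≠ 0`. Hence this scalar
function increases from `s = 0` to `s = 1`, i.e. `⟨f x - f y, Q z⟩ > 0`, and `V' > 0`. -/

open Matrix Set

theorem strictMonoOn_Icc_of_hasDerivAt_pos {f f' : ℝ → ℝ} {a b : ℝ}
    (hf : ∀ t ∈ Icc a b, HasDerivAt f (f' t) t) (hf' : ∀ t ∈ Icc a b, 0 < f' t) :
    StrictMonoOn f (Icc a b) :=
  strictMonoOn_of_hasDerivWithinAt_pos (convex_Icc a b)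
    (fun t ht => (hf t ht).continuousAt.continuousWithinAt)
    (fun t ht => (hf t (interior_subset ht)).hasDerivWithinAt)
    fun t ht => hf' t (interior_subset ht)

theorem lt_of_hasFDerivAt_of_pos_on_segment {E : Type*} [NormedAddCommGroup E]
    [NormedSpace ℝ E] {g : E → ℝ} {g' : E → E →L[ℝ] ℝ} {x y : E}
    (hg : ∀ ξ ∈ segment ℝ x y, HasFDerivAt g (g' ξ) ξ)
    (hg' : ∀ ξ ∈ segment ℝ x y, 0 < g' ξ (x - y)) : g y < g x := by
  have hmem : ∀ s ∈ Icc (0 : ℝ) 1, AffineMap.lineMap (k := ℝ) y x s ∈ segment ℝ x y := by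
    rw [segment_symm, segment_eq_image_lineMap]
    exact fun s hs => mem_image_of_mem _ hs
  have hmono : StrictMonoOn (g ∘ AffineMap.lineMap (k := ℝ) y x) (Icc 0 1) :=
    strictMonoOn_Icc_of_hasDerivAt_pos
      (fun s hs => (hg _ (hmem s hs)).comp_hasDerivAt s AffineMap.hasDerivAt_lineMap)
      fun s hs => hg' _ (hmem s hs)
  simpa [AffineMap.lineMap_apply_zero, AffineMap.lineMap_apply_one] using
    hmono (left_mem_Icc.2 zero_le_one) (right_mem_Icc.2 zero_le_one) zero_lt_one

theorem Matrix.IsSymm.dotProduct_mulVec_comm {R ι : Type*} [CommSemiring R] [Fintype ι]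
    {Q : Matrix ι ι R} (hQ : Q.IsSymm) (v w : ι → R) : v ⬝ᵥ Q *ᵥ w = w ⬝ᵥ Q *ᵥ v := by
  rw [dotProduct_mulVec, ← hQ, vecMul_transpose, dotProduct_comm, hQ]

section DotProduct

variable {𝕜 ι : Type*} [NontriviallyNormedField 𝕜] [Fintype ι]

theorem HasDerivAt.dotProduct {u v : 𝕜 → ι → 𝕜} {u' v' : ι → 𝕜} {t : 𝕜}
    (hu : HasDerivAt u u' t) (hv : HasDerivAt v v' t) :
    HasDerivAt (fun t => u t ⬝ᵥ v t) (u' ⬝ᵥ v t + u t ⬝ᵥ v') t := by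
  simp only [_root_.dotProduct, ← Finset.sum_add_distrib]
  exact HasDerivAt.fun_sum fun i _ => (hasDerivAt_pi.1 hu i).mul (hasDerivAt_pi.1 hv i)

theorem HasDerivAt.mulVec {v : 𝕜 → ι → 𝕜} {v' : ι → 𝕜} {t : 𝕜} {κ : Type*}
    (M : Matrix κ ι 𝕜) (hv : HasDerivAt v v' t) :
    HasDerivAt (fun t => M *ᵥ v t) (M *ᵥ v') t :=
  hasDerivAt_pi.2 fun i =>
    ((hasDerivAt_const t (M i)).dotProduct hv).congr_deriv (by simp [Matrix.mulVec])

theorem HasDerivAt.dotProduct_mulVec_self {Q : Matrix ι ι 𝕜} (hQ : Q.IsSymm) {z : 𝕜 → ι → 𝕜}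
    {z' : ι → 𝕜} {t : 𝕜} (hz : HasDerivAt z z' t) :
    HasDerivAt (fun t => z t ⬝ᵥ Q *ᵥ z t) (2 * (z' ⬝ᵥ Q *ᵥ z t)) t := by
  convert hz.dotProduct (hz.mulVec Q) using 1
  rw [hQ.dotProduct_mulVec_comm (z t), two_mul]

end DotProduct

theorem Matrix.IsSymm.dotProduct_mulVec_add_transpose_mul {R ι : Type*} [CommSemiring R]
    [Fintype ι] {Q : Matrix ι ι R} (hQ : Q.IsSymm) (A : Matrix ι ι R) (z : ι → R) :
    z ⬝ᵥ (Q * A + Aᵀ * Q) *ᵥ z = 2 * ((A *ᵥ z) ⬝ᵥ Q *ᵥ z) := by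
  rw [add_mulVec, dotProduct_add, ← mulVec_mulVec, ← mulVec_mulVec, hQ.dotProduct_mulVec_comm,
    dotProduct_mulVec z Aᵀ, vecMul_transpose, two_mul]

theorem Matrix.IsSymm.mulVec_dotProduct_mulVec_pos {ι : Type*} [Fintype ι]
    {Q A : Matrix ι ι ℝ} (hQ : Q.IsSymm) (hA : (Q * A + Aᵀ * Q).PosDef) {z : ι → ℝ}
    (hz : z ≠ 0) : 0 < (A *ᵥ z) ⬝ᵥ Q *ᵥ z := by
  have hquad := hA.dotProduct_mulVec_pos hz
  rw [star_trivial, hQ.dotProduct_mulVec_add_transpose_mul] at hquad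
  linarith

theorem sub_dotProduct_mulVec_sub_pos {ι : Type*} [Fintype ι] {Q : Matrix ι ι ℝ}
    (hQ : Q.IsSymm) {f : (ι → ℝ) → ι → ℝ} {Df : (ι → ℝ) → Matrix ι ι ℝ} {x y : ι → ℝ}
    (hDf : ∀ ξ ∈ segment ℝ x y, HasFDerivAt f (Df ξ).mulVecLin.toContinuousLinearMap ξ)
    (hpos : ∀ ξ ∈ segment ℝ x y, (Q * Df ξ + (Df ξ)ᵀ * Q).PosDef) (hxy : x ≠ y) :
    0 < (f x - f y) ⬝ᵥ Q *ᵥ (x - y) := by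
  let ℓ := LinearMap.toContinuousLinearMap (dotProductBilin ℝ ℝ (Q *ᵥ (x - y)))
  have hℓ : ∀ v, ℓ v = v ⬝ᵥ Q *ᵥ (x - y) := fun v => dotProduct_comm _ _
  have key : ℓ (f y) < ℓ (f x) :=
    lt_of_hasFDerivAt_of_pos_on_segment (g := fun ξ => ℓ (f ξ))
      (fun ξ hξ => ℓ.hasFDerivAt.comp ξ (hDf ξ hξ)) fun ξ hξ => by
        simpa [hℓ] using hQ.mulVec_dotProduct_mulVec_pos (hpos ξ hξ) (sub_ne_zero.2 hxy)
  rw [hℓ, hℓ] at key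
  rwa [sub_dotProduct, sub_pos]

theorem cone_quadratic_form_strictly_increasing_general
    (n : ℕ) (Q : Matrix (Fin n) (Fin n) ℝ) (hQ : Q.IsSymm)
    (f : (Fin n → ℝ) → (Fin n → ℝ))
    (Df : (Fin n → ℝ) → Matrix (Fin n) (Fin n) ℝ)
    (hDf : ∀ x, HasFDerivAt f (LinearMap.toContinuousLinearMap (Df x).mulVecLin) x)
    (𝒜 : Set (Matrix (Fin n) (Fin n) ℝ))
    (hpos : ∀ A ∈ 𝒜, (Q * A + Aᵀ * Q).PosDef)
    (T : ℝ)
    (x y : ℝ → Fin n → ℝ)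
    (hx : ∀ t ∈ Set.Icc (0 : ℝ) T, HasDerivAt x (f (x t)) t)
    (hy : ∀ t ∈ Set.Icc (0 : ℝ) T, HasDerivAt y (f (y t)) t)
    (hne : ∀ t ∈ Set.Icc (0 : ℝ) T, x t ≠ y t)
    (hseg : ∀ t ∈ Set.Icc (0 : ℝ) T, ∀ ξ ∈ segment ℝ (x t) (y t), Df ξ ∈ 𝒜) :
    StrictMonoOn (fun t => (x t - y t) ⬝ᵥ Q.mulVec (x t - y t)) (Set.Icc 0 T) :=
  strictMonoOn_Icc_of_hasDerivAt_pos
    (fun t ht => ((hx t ht).sub (hy t ht)).dotProduct_mulVec_self hQ)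
    fun t ht => mul_pos two_pos <| sub_dotProduct_mulVec_sub_pos hQ (fun ξ _ => hDf ξ)
      (fun ξ hξ => hpos _ (hseg t ht ξ hξ)) (hne t ht)

/-- If a convex compact set `𝒜` of matrices satisfies that `Q·A + Aᵀ·Q` is positive
definite for all `A ∈ 𝒜` (`Q` symmetric), and `x, y` are distinct solutions of
`ẋ = f(x)` on `[0,T]` whose Jacobians along the segments joining `x(t)` and `y(t)`
all lie in `𝒜`, then `t ↦ ⟨x(t)−y(t), Q(x(t)−y(t))⟩` is strictly increasing on `[0,T]`. -/
theorem cone_quadratic_form_strictly_increasing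
    (n : ℕ) (Q : Matrix (Fin n) (Fin n) ℝ) (hQ : Q.IsSymm)
    (f : (Fin n → ℝ) → (Fin n → ℝ)) (hf : ContDiff ℝ 1 f)
    (Df : (Fin n → ℝ) → Matrix (Fin n) (Fin n) ℝ)
    (hDf : ∀ x, HasFDerivAt f (LinearMap.toContinuousLinearMap (Df x).mulVecLin) x)
    (𝒜 : Set (Matrix (Fin n) (Fin n) ℝ))
    (h𝒜comp : IsCompact 𝒜) (h𝒜conv : Convex ℝ 𝒜)
    (hpos : ∀ A ∈ 𝒜, (Q * A + Aᵀ * Q).PosDef)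
    (T : ℝ) (hT : 0 < T)
    (x y : ℝ → Fin n → ℝ)
    (hx : ∀ t ∈ Set.Icc (0 : ℝ) T, HasDerivAt x (f (x t)) t)
    (hy : ∀ t ∈ Set.Icc (0 : ℝ) T, HasDerivAt y (f (y t)) t)
    (hne : ∀ t ∈ Set.Icc (0 : ℝ) T, x t ≠ y t)
    (hseg : ∀ t ∈ Set.Icc (0 : ℝ) T, ∀ ξ ∈ segment ℝ (x t) (y t), Df ξ ∈ 𝒜) :
    StrictMonoOn (fun t => (x t - y t) ⬝ᵥ Q.mulVec (x t - y t)) (Set.Icc 0 T) :=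
  cone_quadratic_form_strictly_increasing_general n Q hQ f Df hDf 𝒜 hpos T x y hx hy hne hseg
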